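/- Every entry of π̄ is strictly positive, and the maximal relative error of the degree-based approximation of PageRank satisfies max_i |π_i − π̄_i| / π̄_i ≤ (1−α) · (vol(G)/√(d_min)) · ‖(I − αQ)^{-1}‖_∞ · ‖(Q − u₁u₁ᵀ) D^{-1/2} v‖_∞, where ‖x‖_∞ = max_i |x_i| for vectors. -/

import Mathlib

open Matrix Finset

/-- Maximum absolute row-sum norm of a matrix (operator norm induced by the
max vector norm). -/
noncomputable def mNormInf {n : ℕ} (M : Matrix (Fin n) (Fin n) ℝ) : ℝ :=
  ⨆ i, ∑ j, |M i j|

/-- Max norm of a vector. -/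
noncomputable def vNormInf {n : ℕ} (x : Fin n → ℝ) : ℝ :=
  ⨆ i, |x i|

/-!
Put `w = D^{-1/2}(π - π̄)`. From `P d = d` and `(I - αP)π = (1 - α)v` one gets
`(I - αP)(π - π̄) = α(1 - α)(P v - d / vol(G))`, and conjugating by `D^{1/2}`
(`Q = D^{-1/2} P D^{1/2}`) turns this into `(I - αQ) w = α(1 - α)(Q - u₁u₁ᵀ) D^{-1/2} v`.
Hence `|π_i - π̄_i| = √d_i |w_i| ≤ α(1 - α) √d_i ‖(I - αQ)⁻¹‖_∞ ‖(Q - u₁u₁ᵀ) D^{-1/2} v‖_∞`,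
and dividing by `π̄_i ≥ α d_i / vol(G)` gives the bound. Both `I - αP` and `I - αQ` are similar
to `I - αD⁻¹A`, which is invertible by Gershgorin since `D⁻¹A` is row-stochastic.
-/

theorem mNormInf_nonneg {n : ℕ} (M : Matrix (Fin n) (Fin n) ℝ) : 0 ≤ mNormInf M :=
  Real.iSup_nonneg fun _ => sum_nonneg fun _ _ => abs_nonneg _

theorem vNormInf_nonneg {n : ℕ} (x : Fin n → ℝ) : 0 ≤ vNormInf x :=
  Real.iSup_nonneg fun _ => abs_nonneg _

theorem abs_mulVec_apply_le_mNormInf_mul_vNormInf {n : ℕ} (M : Matrix (Fin n) (Fin n) ℝ)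
    (x : Fin n → ℝ) (i : Fin n) : |(M *ᵥ x) i| ≤ mNormInf M * vNormInf x := by
  have hx : ∀ j, |x j| ≤ vNormInf x := le_ciSup (Set.finite_range _).bddAbove
  calc |(M *ᵥ x) i| = |∑ j, M i j * x j| := rfl
    _ ≤ ∑ j, |M i j| * |x j| := by
      simpa only [abs_mul] using abs_sum_le_sum_abs (fun j => M i j * x j) univ
    _ ≤ (∑ j, |M i j|) * vNormInf x := by rw [sum_mul]; gcongr with j; exact hx j
    _ ≤ mNormInf M * vNormInf x := by
      gcongr
      · exact vNormInf_nonneg x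
      · exact le_ciSup (f := fun i => ∑ j, |M i j|) (Set.finite_range _).bddAbove i

theorem one_sub_smul_conj {R A : Type*} [CommRing R] [Ring A] [Algebra R A] {s s' : A}
    (h : s' * s = 1) (α : R) (a : A) : s' * (1 - α • a) * s = 1 - α • (s' * a * s) := by
  rw [mul_sub, sub_mul, mul_one, h, mul_smul_comm, smul_mul_assoc]

section

variable {ι : Type*} [Fintype ι] [DecidableEq ι]

theorem diagonal_inv_mul_diagonal {K : Type*} [Field K] {f : ι → K} (hf : ∀ i, f i ≠ 0) :
    (diagonal fun i => (f i)⁻¹) * diagonal f = 1 := by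
  rw [diagonal_mul_diagonal, ← diagonal_one]
  exact congrArg diagonal (funext fun i => inv_mul_cancel₀ (hf i))

theorem det_one_sub_smul_ne_zero_of_sum_row_le_one {R : Matrix ι ι ℝ} (hR0 : ∀ i j, 0 ≤ R i j)
    (hR : ∀ i, ∑ j, R i j ≤ 1) {α : ℝ} (hα : |α| < 1) : (1 - α • R).det ≠ 0 := by
  refine det_ne_zero_of_sum_row_lt_diag fun k => ?_
  have hoff : ∑ j ∈ univ.erase k, ‖(1 - α • R) k j‖ = |α| * ∑ j ∈ univ.erase k, R k j := by
    rw [mul_sum]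
    refine sum_congr rfl fun j hj => ?_
    simp [one_apply_ne' (ne_of_mem_erase hj), abs_of_nonneg (hR0 k j)]
  have hdiag : 1 - |α| * R k k ≤ ‖(1 - α • R) k k‖ := by
    simpa [abs_mul, abs_of_nonneg (hR0 k k)] using abs_sub_abs_le_abs_sub 1 (α * R k k)
  have hrow : R k k + ∑ j ∈ univ.erase k, R k j ≤ 1 :=
    (add_sum_erase _ _ (mem_univ k)).le.trans (hR k)
  calc ∑ j ∈ univ.erase k, ‖(1 - α • R) k j‖ = |α| * ∑ j ∈ univ.erase k, R k j := hoff
    _ ≤ |α| * (1 - R k k) := by gcongr; linarith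
    _ < 1 - |α| * R k k := by linarith
    _ ≤ ‖(1 - α • R) k k‖ := hdiag

theorem one_sub_smul_mulVec_sub_approx {P : Matrix ι ι ℝ} {d v π : ι → ℝ} {α c : ℝ}
    (hPd : P *ᵥ d = d) (hπ : (1 - α • P) *ᵥ π = (1 - α) • v) :
    (1 - α • P) *ᵥ (π - ((α * c) • d + (1 - α) • v)) = (α * (1 - α)) • (P *ᵥ v - c • d) := by
  rw [mulVec_sub, hπ, mulVec_add, mulVec_smul, mulVec_smul, sub_mulVec, one_mulVec,
    smul_mulVec, hPd, sub_mulVec, one_mulVec, smul_mulVec]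
  module

variable {A : Matrix ι ι ℝ} {d : ι → ℝ}

theorem mul_diagonal_inv_mulVec_self (hd : ∀ i, d i = ∑ j, A i j) (hd0 : ∀ i, d i ≠ 0) :
    (A * diagonal fun i => (d i)⁻¹) *ᵥ d = d := by
  ext i
  simp [mulVec, dotProduct, hd0, hd i]

theorem det_one_sub_smul_mul_diagonal_inv_ne_zero (hA0 : ∀ i j, 0 ≤ A i j)
    (hd : ∀ i, d i = ∑ j, A i j) (hdpos : ∀ i, 0 < d i) {α : ℝ} (hα : |α| < 1) :
    (1 - α • (A * diagonal fun i => (d i)⁻¹)).det ≠ 0 := by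
  have hinv := diagonal_inv_mul_diagonal fun i => (hdpos i).ne'
  have hconj : (diagonal fun i => (d i)⁻¹) * (A * diagonal fun i => (d i)⁻¹) * diagonal d =
      (diagonal fun i => (d i)⁻¹) * A := by
    rw [Matrix.mul_assoc, Matrix.mul_assoc, hinv, Matrix.mul_one]
  rw [← det_conj_of_mul_eq_one hinv (mul_eq_one_comm.1 hinv), one_sub_smul_conj hinv, hconj]
  refine det_one_sub_smul_ne_zero_of_sum_row_le_one (fun i j => ?_) (fun i => ?_) hα
  · rw [diagonal_mul]; exact mul_nonneg (inv_nonneg.2 (hdpos i).le) (hA0 i j)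
  · simp_rw [diagonal_mul, ← mul_sum, ← hd i, inv_mul_cancel₀ (hdpos i).ne', le_refl]

theorem diagonal_inv_sqrt_mul_mul_diagonal_inv_sqrt (hdpos : ∀ i, 0 < d i) :
    (diagonal fun i => (√(d i))⁻¹) * A * (diagonal fun i => (√(d i))⁻¹) =
      (diagonal fun i => (√(d i))⁻¹) * (A * diagonal fun i => (d i)⁻¹) *
        diagonal fun i => √(d i) := by
  simp only [Matrix.mul_assoc, diagonal_mul_diagonal]
  congr 3 with i
  have hs := Real.sqrt_pos.2 (hdpos i)
  field_simp
  rw [Real.sq_sqrt (hdpos i).le, div_self (hdpos i).ne']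

theorem diagonal_inv_sqrt_mulVec_smul_self_eq_vecMulVec_mulVec (hdpos : ∀ i, 0 < d i)
    {v : ι → ℝ} (hv1 : ∑ i, v i = 1) :
    (diagonal fun i => (√(d i))⁻¹) *ᵥ ((∑ j, d j)⁻¹ • d) =
      vecMulVec (fun i => √(d i) / √(∑ j, d j)) (fun i => √(d i) / √(∑ j, d j)) *ᵥ
        ((diagonal fun i => (√(d i))⁻¹) *ᵥ v) := by
  have hvol : √(∑ j, d j) * √(∑ j, d j) = ∑ j, d j :=
    Real.mul_self_sqrt (sum_nonneg fun j _ => (hdpos j).le)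
  have hdot : ∑ j, √(d j) / √(∑ j, d j) * ((√(d j))⁻¹ * v j) = (√(∑ j, d j))⁻¹ := by
    rw [← one_div, ← hv1, sum_div]
    refine sum_congr rfl fun j _ => ?_
    have := Real.sqrt_pos.2 (hdpos j)
    field_simp
  ext i
  simp only [vecMulVec_mulVec, mulVec_diagonal, dotProduct, Pi.smul_apply, smul_eq_mul, hdot,
    op_smul_eq_mul]
  have hs := Real.sqrt_pos.2 (hdpos i)
  have hss := Real.mul_self_sqrt (hdpos i).le
  generalize √(d i) = s at hs hss ⊢
  generalize √(∑ j, d j) = t at hvol ⊢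
  rw [← hss, ← hvol]
  field_simp

theorem one_sub_smul_normalized_mulVec_sub_approx (hd : ∀ i, d i = ∑ j, A i j)
    (hdpos : ∀ i, 0 < d i) {v π : ι → ℝ} (hv1 : ∑ i, v i = 1) {α : ℝ}
    (hπ : (1 - α • (A * diagonal fun i => (d i)⁻¹)) *ᵥ π = (1 - α) • v) :
    (1 - α • ((diagonal fun i => (√(d i))⁻¹) * A * diagonal fun i => (√(d i))⁻¹)) *ᵥ
        ((diagonal fun i => (√(d i))⁻¹) *ᵥ (π - fun i => α * d i / (∑ j, d j) + (1 - α) * v i)) =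
      (α * (1 - α)) • (((diagonal fun i => (√(d i))⁻¹) * A * (diagonal fun i => (√(d i))⁻¹) -
        vecMulVec (fun i => √(d i) / √(∑ j, d j)) (fun i => √(d i) / √(∑ j, d j))) *ᵥ
          ((diagonal fun i => (√(d i))⁻¹) *ᵥ v)) := by
  have hinv := diagonal_inv_mul_diagonal fun i => (Real.sqrt_pos.2 (hdpos i)).ne'
  have happrox : (fun i => α * d i / (∑ j, d j) + (1 - α) * v i) =
      (α * (∑ j, d j)⁻¹) • d + (1 - α) • v := by
    ext i
    simp only [Pi.add_apply, Pi.smul_apply, smul_eq_mul]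
    ring
  rw [diagonal_inv_sqrt_mul_mul_diagonal_inv_sqrt hdpos, ← one_sub_smul_conj hinv, mulVec_mulVec,
    Matrix.mul_assoc, mul_eq_one_comm.1 hinv, Matrix.mul_one, ← mulVec_mulVec, happrox,
    one_sub_smul_mulVec_sub_approx (mul_diagonal_inv_mulVec_self hd fun i => (hdpos i).ne') hπ,
    mulVec_smul, mulVec_sub, sub_mulVec,
    ← diagonal_inv_sqrt_mulVec_smul_self_eq_vecMulVec_mulVec hdpos hv1, mulVec_mulVec v,
    mulVec_mulVec, Matrix.mul_assoc _ (diagonal _), mul_eq_one_comm.1 hinv, Matrix.mul_one]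

end

theorem abs_pagerank_sub_approx_le {n : ℕ} {A : Matrix (Fin n) (Fin n) ℝ} (hA0 : ∀ i j, 0 ≤ A i j)
    {d : Fin n → ℝ} (hd : ∀ i, d i = ∑ j, A i j) (hdpos : ∀ i, 0 < d i) {v : Fin n → ℝ}
    (hv1 : ∑ i, v i = 1) {α : ℝ} (hα : |α| < 1) (i : Fin n) :
    |(((1 - α) • ((1 - α • (A * diagonal fun i => (d i)⁻¹))⁻¹ *ᵥ v) : Fin n → ℝ) -
        fun i => α * d i / (∑ j, d j) + (1 - α) * v i) i| ≤
      |α * (1 - α)| * √(d i) *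
        (mNormInf (1 - α • ((diagonal fun i => (√(d i))⁻¹) * A * diagonal fun i => (√(d i))⁻¹))⁻¹ *
          vNormInf (((diagonal fun i => (√(d i))⁻¹) * A * (diagonal fun i => (√(d i))⁻¹) -
            vecMulVec (fun i => √(d i) / √(∑ j, d j)) (fun i => √(d i) / √(∑ j, d j))) *ᵥ
              ((diagonal fun i => (√(d i))⁻¹) *ᵥ v))) := by
  have hdetP := det_one_sub_smul_mul_diagonal_inv_ne_zero hA0 hd hdpos hα
  have hinv := diagonal_inv_mul_diagonal fun i => (Real.sqrt_pos.2 (hdpos i)).ne'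
  have hdetQ : (1 - α • ((diagonal fun i => (√(d i))⁻¹) * A * diagonal fun i => (√(d i))⁻¹)).det
      ≠ 0 := by
    rwa [diagonal_inv_sqrt_mul_mul_diagonal_inv_sqrt hdpos, ← one_sub_smul_conj hinv,
      det_conj_of_mul_eq_one hinv (mul_eq_one_comm.1 hinv)]
  set S' := diagonal fun i => (√(d i))⁻¹
  set P := A * diagonal fun i => (d i)⁻¹
  set Q := S' * A * S'
  set r := (Q - vecMulVec (fun i => √(d i) / √(∑ j, d j)) (fun i => √(d i) / √(∑ j, d j))) *ᵥ
    (S' *ᵥ v)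
  set x := (1 - α) • ((1 - α • P)⁻¹ *ᵥ v) - fun i => α * d i / (∑ j, d j) + (1 - α) * v i
  have hπ : (1 - α • P) *ᵥ ((1 - α) • ((1 - α • P)⁻¹ *ᵥ v)) = (1 - α) • v := by
    rw [mulVec_smul, mulVec_mulVec, mul_nonsing_inv _ hdetP.isUnit, one_mulVec]
  have hw : S' *ᵥ x = (α * (1 - α)) • ((1 - α • Q)⁻¹ *ᵥ r) := by
    rw [← mulVec_smul, ← one_sub_smul_normalized_mulVec_sub_approx hd hdpos hv1 hπ, mulVec_mulVec,
      nonsing_inv_mul _ hdetQ.isUnit, one_mulVec]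
  have hx : x i = √(d i) * (S' *ᵥ x) i := by
    have := Real.sqrt_pos.2 (hdpos i)
    rw [mulVec_diagonal]
    field_simp
  rw [hx, hw, Pi.smul_apply, smul_eq_mul, abs_mul, abs_mul, abs_of_nonneg (Real.sqrt_nonneg _),
    mul_left_comm, mul_assoc]
  gcongr
  exact abs_mulVec_apply_le_mNormInf_mul_vNormInf _ _ i

theorem div_le_one_sub_mul_div_sqrt_mul {α δ δ₀ V K e p : ℝ} (hα : α ∈ Set.Ioo 0 1)
    (hδ₀ : 0 < δ₀) (hδ₀δ : δ₀ ≤ δ) (hV : 0 < V) (hK : 0 ≤ K) (he : e ≤ α * (1 - α) * √δ * K)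
    (hp : α * δ / V ≤ p) : e / p ≤ (1 - α) * (V / √δ₀) * K := by
  obtain ⟨hα0, hα1⟩ := hα
  have hδ : 0 < δ := hδ₀.trans_le hδ₀δ
  calc e / p ≤ α * (1 - α) * √δ * K / (α * δ / V) := by gcongr
    _ = (1 - α) * (V / √δ) * K := by
        field_simp
        rw [Real.sq_sqrt hδ.le]
        ring
    _ ≤ (1 - α) * (V / √δ₀) * K := by gcongr

theorem pagerank_relative_error_bound_general
    (n : ℕ) [NeZero n]
    (A : Matrix (Fin n) (Fin n) ℝ) (hA0 : ∀ i j, 0 ≤ A i j)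
    (d : Fin n → ℝ) (hd : ∀ i, d i = ∑ j, A i j) (hdpos : ∀ i, 0 < d i)
    (α : ℝ) (hα : α ∈ Set.Ioo (0 : ℝ) 1)
    (v : Fin n → ℝ) (hv0 : ∀ i, 0 ≤ v i) (hv1 : ∑ i, v i = 1)
    (P : Matrix (Fin n) (Fin n) ℝ)
    (hP : P = A * Matrix.diagonal (fun i => (d i)⁻¹))
    (Q : Matrix (Fin n) (Fin n) ℝ)
    (hQ : Q = Matrix.diagonal (fun i => (Real.sqrt (d i))⁻¹) * A *
      Matrix.diagonal (fun i => (Real.sqrt (d i))⁻¹))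
    (u₁ : Fin n → ℝ)
    (hu₁ : u₁ = fun i => Real.sqrt (d i) / Real.sqrt (∑ j, d j))
    (π : Fin n → ℝ) (hπ : π = (1 - α) • ((1 - α • P)⁻¹ *ᵥ v))
    (πbar : Fin n → ℝ)
    (hπbar : πbar = fun i => α * d i / (∑ j, d j) + (1 - α) * v i) :
    (∀ i, 0 < πbar i) ∧
      (⨆ i, |π i - πbar i| / πbar i) ≤
        (1 - α) * ((∑ j, d j) / Real.sqrt (univ.inf' univ_nonempty d)) *
          mNormInf ((1 - α • Q)⁻¹) *
          vNormInf ((Q - Matrix.vecMulVec u₁ u₁) *ᵥ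
            (Matrix.diagonal (fun i => (Real.sqrt (d i))⁻¹) *ᵥ v)) := by
  obtain ⟨hα0, hα1⟩ := hα
  subst hP hQ hu₁ hπ hπbar
  have hvol : 0 < ∑ j, d j := sum_pos (fun i _ => hdpos i) univ_nonempty
  have hπbar : ∀ i, α * d i / ∑ j, d j ≤ α * d i / ∑ j, d j + (1 - α) * v i := fun i =>
    le_add_of_nonneg_right (mul_nonneg (sub_nonneg.2 hα1.le) (hv0 i))
  refine ⟨fun i => (div_pos (mul_pos hα0 (hdpos i)) hvol).trans_le (hπbar i),
    ciSup_le fun i => ?_⟩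
  have herr := abs_pagerank_sub_approx_le hA0 hd hdpos hv1 (abs_lt.2 ⟨by linarith, hα1⟩) i
  rw [abs_of_pos (mul_pos hα0 (sub_pos.2 hα1))] at herr
  exact (div_le_one_sub_mul_div_sqrt_mul ⟨hα0, hα1⟩ ((lt_inf'_iff _).2 fun i _ => hdpos i)
    (inf'_le _ (mem_univ i)) hvol (mul_nonneg (mNormInf_nonneg _) (vNormInf_nonneg _)) herr
    (hπbar i)).trans_eq (mul_assoc _ _ _).symm

/-- every entry of `π̄` is positive and the maximal relative error satisfies
`max_i |π_i − π̄_i|/π̄_i ≤ (1−α)·(vol(G)/√d_min)·‖(I − αQ)^{-1}‖_∞·‖(Q − u₁u₁ᵀ)D^{-1/2}v‖_∞`. -/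
theorem pagerank_relative_error_bound
    (n : ℕ) [NeZero n]
    (A : Matrix (Fin n) (Fin n) ℝ) (hAsymm : A.IsSymm) (hA0 : ∀ i j, 0 ≤ A i j)
    (d : Fin n → ℝ) (hd : ∀ i, d i = ∑ j, A i j) (hdpos : ∀ i, 0 < d i)
    (α : ℝ) (hα : α ∈ Set.Ioo (0 : ℝ) 1)
    (v : Fin n → ℝ) (hv0 : ∀ i, 0 ≤ v i) (hv1 : ∑ i, v i = 1)
    (P : Matrix (Fin n) (Fin n) ℝ)
    (hP : P = A * Matrix.diagonal (fun i => (d i)⁻¹))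
    (Q : Matrix (Fin n) (Fin n) ℝ)
    (hQ : Q = Matrix.diagonal (fun i => (Real.sqrt (d i))⁻¹) * A *
      Matrix.diagonal (fun i => (Real.sqrt (d i))⁻¹))
    (u₁ : Fin n → ℝ)
    (hu₁ : u₁ = fun i => Real.sqrt (d i) / Real.sqrt (∑ j, d j))
    (π : Fin n → ℝ) (hπ : π = (1 - α) • ((1 - α • P)⁻¹ *ᵥ v))
    (πbar : Fin n → ℝ)
    (hπbar : πbar = fun i => α * d i / (∑ j, d j) + (1 - α) * v i) :
    (∀ i, 0 < πbar i) ∧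
      (⨆ i, |π i - πbar i| / πbar i) ≤
        (1 - α) * ((∑ j, d j) / Real.sqrt (univ.inf' univ_nonempty d)) *
          mNormInf ((1 - α • Q)⁻¹) *
          vNormInf ((Q - Matrix.vecMulVec u₁ u₁) *ᵥ
            (Matrix.diagonal (fun i => (Real.sqrt (d i))⁻¹) *ᵥ v)) :=
  pagerank_relative_error_bound_general n A hA0 d hd hdpos α hα v hv0 hv1 P hP Q hQ u₁ hu₁ π hπ πbar
    hπbar
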